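/- Let B be a small category, C a cocomplete category, and Ψ : B ⥤ C a fully faithful functor. Let R : C ⥤ [Bᵒᵖ, Type] be the restricted Yoneda functor, R(c) = Hom_C(Ψ(−), c). If R is fully faithful (equivalently, Ψ is dense) and R preserves small colimits, then R is an equivalence of categories. -/

import Mathlib

open CategoryTheory CategoryTheory.Limits

universe u₁ u₂

/-- The restricted Yoneda functor, as defined in Mathlib of December 2024
(removed since; its replacement `restrictedULiftYoneda` inserts a `ULift`). -/
def CategoryTheory.Presheaf.restrictedYoneda.{v, u, u'} {C : Type u} [Category.{v} C]
    {ℰ : Type u'} [Category.{v} ℰ] (A : C ⥤ ℰ) : ℰ ⥤ Cᵒᵖ ⥤ Type v :=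
  yoneda ⋙ (Functor.whiskeringLeft _ _ (Type v)).obj (Functor.op A)

/-! Since `R` is fully faithful and preserves colimits, its essential image is closed under
colimits. It contains every representable, because `R (Ψ b) = Hom(Ψ -, Ψ b) ≅ Hom(-, b)` when `Ψ`
is fully faithful, and every presheaf is a colimit of representables. -/

namespace CategoryTheory

universe v u u'

def Functor.FullyFaithful.restrictedYonedaObjIso {B : Type u} [Category.{v} B]
    {C : Type u'} [Category.{v} C] {Ψ : B ⥤ C} (hΨ : Ψ.FullyFaithful) (b : B) :
    (Presheaf.restrictedYoneda Ψ).obj (Ψ.obj b) ≅ yoneda.obj b :=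
  NatIso.ofComponents (fun X => (hΨ.homEquiv (X := X.unop) (Y := b)).symm.toIso)
    fun {X _} f => by
      ext (g : Ψ.obj X.unop ⟶ Ψ.obj b)
      exact hΨ.map_injective (by simp [Presheaf.restrictedYoneda])

theorem Functor.essSurj_of_yoneda_mem_essImage {B : Type v} [SmallCategory B]
    {D : Type u} [Category.{v} D] [HasColimits D] (F : D ⥤ Bᵒᵖ ⥤ Type v)
    [F.Full] [F.Faithful] [PreservesColimits F] (h : ∀ b, F.essImage (yoneda.obj b)) :
    F.EssSurj where
  mem_essImage P :=
    F.essImage.prop_of_isColimit (Presheaf.isColimitTautologicalCocone P) fun j => h j.left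

end CategoryTheory

/-- Let B be a small category, C a cocomplete category, and Ψ : B ⥤ C a
fully faithful functor. Let R : C ⥤ [Bᵒᵖ, Type] be the restricted Yoneda functor,
R(c) = Hom_C(Ψ(−), c). If R is fully faithful (equivalently, Ψ is dense) and R
preserves small colimits, then R is an equivalence of categories. -/
theorem restrictedYoneda_isEquivalence
    (B : Type u₁) [SmallCategory B]
    (C : Type u₂) [Category.{u₁} C] [HasColimits C]
    (Ψ : B ⥤ C) [Ψ.Full] [Ψ.Faithful]
    (hfull : (Presheaf.restrictedYoneda Ψ).Full)
    (hfaithful : (Presheaf.restrictedYoneda Ψ).Faithful)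
    (hpres : PreservesColimits (Presheaf.restrictedYoneda Ψ)) :
    (Presheaf.restrictedYoneda Ψ).IsEquivalence := by
  have : (Presheaf.restrictedYoneda Ψ).EssSurj :=
    Functor.essSurj_of_yoneda_mem_essImage _ fun b =>
      ⟨Ψ.obj b, ⟨(Functor.FullyFaithful.ofFullyFaithful Ψ).restrictedYonedaObjIso b⟩⟩
  exact { }
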